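/- arXiv:2002.04912 — 2 statements merged into one kernel-verified Lean document; each statement's English description precedes it below -/
import Mathlib

section
/- Let p be a prime, let n, k, l be positive integers with l | k and k/l even, and set d = gcd(n,k), e = gcd(n,l), L = lcm(d,l). Suppose d/e is even. Then the set {x ∈ 𝔽_{p^n} : S_l^k(x) = 0} equals 𝔽_{p^d} if p divides k/L, and equals {x + x^{p^e} : x ∈ 𝔽_{p^d}} otherwise. Consequently its cardinality is p^d if p divides k/L, and p^{d−e} otherwise. -/
open Finset

/-- `Tmap p u v x = Σ_{i=0}^{v/u - 1} x^{p^{u i}}` on the algebraic closure of `𝔽_p`. -/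
noncomputable def Tmap (p : ℕ) [Fact p.Prime] (u v : ℕ) (x : AlgebraicClosure (ZMod p)) :
    AlgebraicClosure (ZMod p) :=
  ∑ i ∈ Finset.range (v / u), x ^ p ^ (u * i)

/-- `Smap p u v x = Σ_{i=0}^{v/u - 1} (-1)^i x^{p^{u i}}` on the algebraic closure of `𝔽_p`. -/
noncomputable def Smap (p : ℕ) [Fact p.Prime] (u v : ℕ) (x : AlgebraicClosure (ZMod p)) :
    AlgebraicClosure (ZMod p) :=
  ∑ i ∈ Finset.range (v / u), (-1 : AlgebraicClosure (ZMod p)) ^ i * x ^ p ^ (u * i)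

/-- `Ffield p m` is the subfield `𝔽_{p^m} = {x : x^{p^m} = x}` of the algebraic closure of `𝔽_p`. -/
def Ffield (p : ℕ) [Fact p.Prime] (m : ℕ) : Set (AlgebraicClosure (ZMod p)) :=
  {x | x ^ p ^ m = x}

/-!
If `k / l` is even, telescoping gives `S_l^k(x)^{p^l} + S_l^k(x) = x - x^{p^k}`, so every zero
of `S_l^k` in `𝔽_{p^n}` lies in `𝔽_{p^n} ∩ 𝔽_{p^k} = 𝔽_{p^d}`. On `𝔽_{p^d}` the summands
`(-1)^i x^{p^{e i}}` are periodic in `i` with the even period `d / e`, and `l / e` is an odd unit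
modulo `d / e`; hence `S_l^k = (k / L) • S_e^d` there. So the kernel is `𝔽_{p^d}` when
`p ∣ k / L`, and otherwise it is the kernel of `S_e^d` on `𝔽_{p^d}`. By telescoping again this
kernel contains the image of `x ↦ x + x^{p^e}`, which has at least `p^{d-e}` points since its
fibres are root sets of a polynomial of degree `p^e`, while `S_e^d` is a polynomial of degree
`p^{d-e}`.
-/

open Polynomial Function

namespace Function.Periodic

variable {M : Type*} [AddCommMonoid M] {f : ℕ → M} {B : ℕ}

theorem sum_range_mul (hf : Periodic f B) (T : ℕ) :
    ∑ i ∈ range (T * B), f i = T • ∑ i ∈ range B, f i := by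
  induction T with
  | zero => simp
  | succ T ih =>
    rw [add_mul, one_mul, sum_range_add, ih, succ_nsmul]
    congr 1
    exact sum_congr rfl fun i _ => by rw [add_comm, ← smul_eq_mul, hf.nsmul T i]

theorem sum_range_comp_mul (hf : Periodic f B) {c : ℕ} (hc : c.Coprime B) :
    ∑ i ∈ range B, f (c * i) = ∑ i ∈ range B, f i := by
  have hmaps : Set.MapsTo (fun i => c * i % B) (range B) (range B) := fun i hi =>
    mem_range.2 (Nat.mod_lt _ (pos_of_ne_zero (by rintro rfl; simp at hi)))
  have hinj : Set.InjOn (fun i => c * i % B) (range B) := fun i hi j hj hij =>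
    (Nat.ModEq.cancel_left_of_coprime (Nat.coprime_comm.1 hc) hij).eq_of_lt_of_lt
      (mem_range.1 hi) (mem_range.1 hj)
  exact sum_nbij (fun i => c * i % B) hmaps hinj
    (surjOn_of_injOn_of_card_le _ hmaps hinj le_rfl) fun i _ => (hf.map_mod_nat _).symm

end Function.Periodic

theorem Nat.div_eq_div_lcm_mul_div_gcd {d l k : ℕ} (hdk : d ∣ k) (hlk : l ∣ k) :
    k / l = k / d.lcm l * (d / d.gcd l) := by
  obtain ⟨q, rfl⟩ := Nat.lcm_dvd hdk hlk
  rcases Nat.eq_zero_or_pos (d.lcm l) with h0 | hpos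
  · simp [h0]
  have hl : 0 < l := Nat.pos_of_ne_zero fun h => by simp [h] at hpos
  have hlcm : d.lcm l = l * (d / d.gcd l) :=
    (Nat.div_mul_right_comm (d.gcd_dvd_left l) l).symm.trans (mul_comm _ _)
  rw [Nat.mul_div_cancel_left q hpos, hlcm, mul_right_comm, mul_assoc,
    Nat.mul_div_cancel_left _ hl]

theorem Polynomial.ncard_le_natDegree_mul_ncard_image_eval {R : Type*} [CommRing R] [IsDomain R]
    {P : R[X]} (hP : 0 < P.degree) {s : Set R} (hs : s.Finite) :
    s.ncard ≤ P.natDegree * ((fun x => P.eval x) '' s).ncard := by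
  classical
  lift s to Finset R using hs
  rw [Set.ncard_coe_finset, ← Finset.coe_image, Set.ncard_coe_finset]
  refine card_le_mul_card_image _ _ fun b _ => ?_
  calc #{x ∈ s | P.eval x = b} ≤ #(P - C b).roots.toFinset :=
        card_le_card fun x hx => by
          simp_all [mem_roots_sub_C hP]
    _ ≤ Multiset.card (P - C b).roots := Multiset.toFinset_card_le _
    _ ≤ P.natDegree := card_roots_sub_C' hP

section
variable {p : ℕ} [Fact p.Prime]
local notation "K" => AlgebraicClosure (ZMod p)

theorem mem_Ffield_iff_isPeriodicPt {m : ℕ} {x : K} :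
    x ∈ Ffield p m ↔ IsPeriodicPt (frobenius K p) m x := by
  rw [IsPeriodicPt, IsFixedPt, iterate_frobenius]; rfl

theorem Ffield_subset_Ffield {m n : ℕ} (h : m ∣ n) : Ffield p m ⊆ Ffield p n := fun _ hx =>
  mem_Ffield_iff_isPeriodicPt.2 ((mem_Ffield_iff_isPeriodicPt.1 hx).trans_dvd h)

theorem Ffield_inter_Ffield (m n : ℕ) : Ffield p m ∩ Ffield p n = Ffield p (m.gcd n) :=
  Set.Subset.antisymm
    (fun _ ⟨hm, hn⟩ => mem_Ffield_iff_isPeriodicPt.2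
      ((mem_Ffield_iff_isPeriodicPt.1 hm).gcd (mem_Ffield_iff_isPeriodicPt.1 hn)))
    (Set.subset_inter (Ffield_subset_Ffield (m.gcd_dvd_left n))
      (Ffield_subset_Ffield (m.gcd_dvd_right n)))

theorem Ffield_eq_rootSet {m : ℕ} (hm : m ≠ 0) :
    Ffield p m = (X ^ p ^ m - X : (ZMod p)[X]).rootSet K := by
  ext x
  rw [mem_rootSet_of_ne
    (FiniteField.X_pow_card_pow_sub_X_ne_zero _ hm (Fact.out : p.Prime).one_lt)]
  simp [Ffield, sub_eq_zero]

theorem ncard_Ffield {m : ℕ} (hm : m ≠ 0) : (Ffield p m).ncard = p ^ m := by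
  rw [Ffield_eq_rootSet hm, ← Nat.card_coe_set_eq, Nat.card_eq_fintype_card,
    card_rootSet_eq_natDegree (galois_poly_separable p _ (dvd_pow_self p hm))
      (IsAlgClosed.splits _),
    FiniteField.X_pow_card_pow_sub_X_natDegree_eq _ hm (Fact.out : p.Prime).one_lt]

theorem map_Smap (φ : K →+* K) (u v : ℕ) (x : K) : φ (Smap p u v x) = Smap p u v (φ x) := by
  simp [Smap, map_sum]

theorem Smap_add (u v : ℕ) (x y : K) : Smap p u v (x + y) = Smap p u v x + Smap p u v y := by
  simp only [Smap, add_pow_char_pow, mul_add, sum_add_distrib]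

theorem Smap_pow_add_Smap {l k : ℕ} (hlk : l ∣ k) (hkl : Even (k / l)) (x : K) :
    Smap p l k x ^ p ^ l + Smap p l k x = x - x ^ p ^ k := by
  set g : ℕ → K := fun i => (-1) ^ i * x ^ p ^ (l * i)
  have hshift : Smap p l k x ^ p ^ l = ∑ i ∈ range (k / l), -g (i + 1) := by
    rw [← iterateFrobenius_def (p := p), map_Smap, Smap]
    refine sum_congr rfl fun i _ => ?_
    simp only [g, iterateFrobenius_def, ← pow_mul, ← pow_add, mul_add, mul_one, pow_succ]
    ring
  rw [hshift, Smap, ← sum_add_distrib]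
  calc ∑ i ∈ range (k / l), (-g (i + 1) + g i) = g 0 - g (k / l) := by
        rw [← sum_range_sub']; exact sum_congr rfl fun i _ => by ring
    _ = x - x ^ p ^ k := by simp [g, hkl.neg_one_pow, Nat.mul_div_cancel' hlk]

theorem mem_Ffield_of_Smap_eq_zero {l k : ℕ} (hlk : l ∣ k) (hkl : Even (k / l)) {x : K}
    (hx : Smap p l k x = 0) : x ∈ Ffield p k := by
  have h := Smap_pow_add_Smap hlk hkl x
  rw [hx, zero_pow (pow_ne_zero l (Fact.out : p.Prime).ne_zero), add_zero, eq_comm,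
    sub_eq_zero] at h
  exact h.symm

theorem Smap_eq_mul_Smap {e d l k T : ℕ} (hed : e ∣ d) (hel : e ∣ l) (hB : Even (d / e))
    (hco : (l / e).Coprime (d / e)) (hT : k / l = T * (d / e)) {x : K} (hx : x ∈ Ffield p d) :
    Smap p l k x = T * Smap p e d x := by
  set B := d / e
  set c := l / e
  set f : ℕ → K := fun i => (-1) ^ i * x ^ p ^ (e * i)
  have hf : Periodic f B := fun i => by
    have hx' : x ^ p ^ (e * B) = x := by rw [Nat.mul_div_cancel' hed]; exact hx
    show (-1) ^ (i + B) * x ^ p ^ (e * (i + B)) = (-1) ^ i * x ^ p ^ (e * i)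
    rw [pow_add, hB.neg_one_pow, mul_one, mul_add, pow_add, mul_comm (p ^ (e * i)), pow_mul, hx']
  have hc : Odd c := Nat.coprime_two_right.1 (hco.coprime_dvd_right hB.two_dvd)
  have hfc : Periodic (fun i => f (c * i)) B := fun i => by
    show f (c * (i + B)) = f (c * i)
    rw [mul_add, ← smul_eq_mul c B, hf.nsmul]
  calc Smap p l k x = ∑ i ∈ range (T * B), f (c * i) := by
        rw [Smap, hT]
        refine sum_congr rfl fun i _ => ?_
        show _ = (-1) ^ (c * i) * x ^ p ^ (e * (c * i))
        rw [pow_mul (-1 : K) c i, hc.neg_one_pow, ← mul_assoc, Nat.mul_div_cancel' hel]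
    _ = T * Smap p e d x := by
        rw [hfc.sum_range_mul, hf.sum_range_comp_mul hco, nsmul_eq_mul]; rfl

variable (p) in
noncomputable def Spoly (u v : ℕ) : (ZMod p)[X] :=
  ∑ i ∈ range (v / u), C ((-1) ^ i) * X ^ p ^ (u * i)

theorem aeval_Spoly (u v : ℕ) (x : K) : aeval x (Spoly p u v) = Smap p u v x := by
  simp [Spoly, Smap]

theorem natDegree_Spoly_le (u v : ℕ) : (Spoly p u v).natDegree ≤ p ^ (u * (v / u - 1)) :=
  natDegree_sum_le_of_forall_le _ _ fun _ hi => (natDegree_C_mul_X_pow_le _ _).trans <|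
    Nat.pow_le_pow_right (Fact.out : p.Prime).pos <|
      Nat.mul_le_mul_left u (Nat.le_sub_one_of_lt (mem_range.1 hi))

theorem coeff_Spoly_top {u v : ℕ} (h : 0 < v / u) :
    (Spoly p u v).coeff (p ^ (u * (v / u - 1))) = (-1) ^ (v / u - 1) := by
  have hu : u ≠ 0 := by rintro rfl; simp at h
  rw [Spoly, finsetSum_coeff, sum_eq_single (v / u - 1)]
  · rw [coeff_C_mul_X_pow, if_pos rfl]
  · intro i _ hi
    rw [coeff_C_mul_X_pow, if_neg]
    intro heq
    exact hi (Nat.eq_of_mul_eq_mul_left (Nat.pos_of_ne_zero hu)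
      (Nat.pow_right_injective (Fact.out : p.Prime).two_le heq)).symm
  · simp [h]

theorem Spoly_ne_zero {u v : ℕ} (h : 0 < v / u) : Spoly p u v ≠ 0 := fun h0 =>
  pow_ne_zero (v / u - 1) (neg_ne_zero.2 (one_ne_zero (α := ZMod p)))
    (by rw [← coeff_Spoly_top h, h0, coeff_zero])

theorem setOf_Smap_eq_zero_eq_rootSet {u v : ℕ} (h : 0 < v / u) :
    {x : K | Smap p u v x = 0} = (Spoly p u v).rootSet K := by
  ext x
  rw [mem_rootSet_of_ne (Spoly_ne_zero h), aeval_Spoly]; rfl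

theorem finite_setOf_Smap_eq_zero {u v : ℕ} (h : 0 < v / u) :
    {x : K | Smap p u v x = 0}.Finite :=
  setOf_Smap_eq_zero_eq_rootSet (p := p) h ▸ rootSet_finite _ _

theorem ncard_setOf_Smap_eq_zero_le {u v : ℕ} (h : 0 < v / u) :
    {x : K | Smap p u v x = 0}.ncard ≤ p ^ (u * (v / u - 1)) := by
  rw [setOf_Smap_eq_zero_eq_rootSet h]
  exact (ncard_rootSet_le _ _).trans (natDegree_Spoly_le u v)

theorem image_add_pow_Ffield_subset {e d : ℕ} (hed : e ∣ d) (hB : Even (d / e)) :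
    (fun x => x + x ^ p ^ e) '' Ffield p d ⊆ {x | x ∈ Ffield p d ∧ Smap p e d x = 0} := by
  rintro _ ⟨y, hy, rfl⟩
  have hy' : y ^ p ^ d = y := hy
  refine ⟨?_, ?_⟩
  · show (y + y ^ p ^ e) ^ p ^ d = y + y ^ p ^ e
    rw [add_pow_char_pow, pow_right_comm, hy']
  · rw [Smap_add, ← iterateFrobenius_def p e y, ← map_Smap, iterateFrobenius_def,
      add_comm, Smap_pow_add_Smap hed hB, hy', sub_self]

theorem le_ncard_image_add_pow_Ffield {e d : ℕ} (he : e ≠ 0) (hd : d ≠ 0) (hed : e ≤ d) :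
    p ^ (d - e) ≤ ((fun x => x + x ^ p ^ e) '' Ffield p d).ncard := by
  have hlt : (X : Polynomial K).degree < (X ^ p ^ e : Polynomial K).degree := by
    rw [degree_X, degree_X_pow]
    exact_mod_cast Nat.one_lt_pow he (Fact.out : p.Prime).one_lt
  have hdeg : 0 < (X ^ p ^ e + X : Polynomial K).degree := by
    rw [degree_add_eq_left_of_degree_lt hlt, degree_X_pow]
    exact_mod_cast pow_pos (Fact.out : p.Prime).pos e
  have hcount := ncard_le_natDegree_mul_ncard_image_eval hdeg
    (Ffield_eq_rootSet (p := p) hd ▸ rootSet_finite _ _)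
  rw [natDegree_add_eq_left_of_degree_lt hlt, natDegree_X_pow, ncard_Ffield hd] at hcount
  simp only [eval_add, eval_pow, eval_X, add_comm (_ ^ _)] at hcount
  refine Nat.le_of_mul_le_mul_left ?_ (pow_pos (Fact.out : p.Prime).pos e)
  rwa [← pow_add, Nat.add_sub_cancel' hed]

theorem image_add_pow_Ffield {e d : ℕ} (he : e ≠ 0) (hd : d ≠ 0) (hed : e ∣ d)
    (hB : Even (d / e)) :
    (fun x => x + x ^ p ^ e) '' Ffield p d = {x | x ∈ Ffield p d ∧ Smap p e d x = 0} ∧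
      ((fun x => x + x ^ p ^ e) '' Ffield p d).ncard = p ^ (d - e) := by
  have hle : e ≤ d := Nat.le_of_dvd (Nat.pos_of_ne_zero hd) hed
  have hpos : 0 < d / e := Nat.div_pos hle (Nat.pos_of_ne_zero he)
  have hsub : {x | x ∈ Ffield p d ∧ Smap p e d x = 0} ⊆ {x : K | Smap p e d x = 0} :=
    fun _ hx => hx.2
  have hupper : {x | x ∈ Ffield p d ∧ Smap p e d x = 0}.ncard ≤ p ^ (d - e) :=
    calc _ ≤ {x : K | Smap p e d x = 0}.ncard :=
          Set.ncard_le_ncard hsub (finite_setOf_Smap_eq_zero hpos)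
      _ ≤ p ^ (e * (d / e - 1)) := ncard_setOf_Smap_eq_zero_le hpos
      _ = p ^ (d - e) := by rw [Nat.mul_sub_one, Nat.mul_div_cancel' hed]
  have hlower := le_ncard_image_add_pow_Ffield (p := p) he hd hle
  have heq := Set.eq_of_subset_of_ncard_le (image_add_pow_Ffield_subset hed hB)
    (hupper.trans hlower) ((finite_setOf_Smap_eq_zero hpos).subset hsub)
  exact ⟨heq, le_antisymm (heq ▸ hupper) hlower⟩

theorem setOf_mem_Ffield_Smap_eq_zero {n k l : ℕ} (hn : 0 < n) (hlk : l ∣ k)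
    (hkl : Even (k / l)) (hde : Even (n.gcd k / n.gcd l)) :
    {x | x ∈ Ffield p n ∧ Smap p l k x = 0} = {x | x ∈ Ffield p (n.gcd k) ∧
      ((k / (n.gcd k).lcm l : ℕ) : K) * Smap p (n.gcd l) (n.gcd k) x = 0} := by
  set d := n.gcd k
  set e := n.gcd l
  have hgcd : d.gcd l = e := by rw [Nat.gcd_assoc, Nat.gcd_eq_right hlk]
  have hed : e ∣ d := hgcd ▸ d.gcd_dvd_left l
  have hel : e ∣ l := hgcd ▸ d.gcd_dvd_right l
  have hco : (l / e).Coprime (d / e) :=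
    hgcd ▸ (Nat.coprime_div_gcd_div_gcd (hgcd ▸ Nat.gcd_pos_of_pos_left l hn)).symm
  have hT : k / l = k / d.lcm l * (d / e) :=
    hgcd ▸ Nat.div_eq_div_lcm_mul_div_gcd (n.gcd_dvd_right k) hlk
  ext x
  constructor
  · rintro ⟨hxn, hS⟩
    have hxd : x ∈ Ffield p d :=
      Ffield_inter_Ffield (p := p) n k ▸ ⟨hxn, mem_Ffield_of_Smap_eq_zero hlk hkl hS⟩
    exact ⟨hxd, by rw [← Smap_eq_mul_Smap hed hel hde hco hT hxd, hS]⟩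
  · rintro ⟨hxd, hS⟩
    exact ⟨Ffield_subset_Ffield (n.gcd_dvd_left k) hxd,
      by rw [Smap_eq_mul_Smap hed hel hde hco hT hxd, hS]⟩

end

theorem stmt9_general (p : ℕ) [Fact p.Prime] (n k l : ℕ) (hn : 0 < n)
    (hlk : l ∣ k) (hkl : Even (k / l)) (d e L : ℕ)
    (hd : d = Nat.gcd n k) (he : e = Nat.gcd n l) (hL : L = Nat.lcm d l)
    (hde : Even (d / e)) :
    (p ∣ k / L →
      {x | x ∈ Ffield p n ∧ Smap p l k x = 0} = Ffield p d ∧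
      {x | x ∈ Ffield p n ∧ Smap p l k x = 0}.ncard = p ^ d) ∧
    (¬ p ∣ k / L →
      {x | x ∈ Ffield p n ∧ Smap p l k x = 0} = (fun x => x + x ^ p ^ e) '' Ffield p d ∧
      {x | x ∈ Ffield p n ∧ Smap p l k x = 0}.ncard = p ^ (d - e)) := by
  subst hd he hL
  have hd0 : n.gcd k ≠ 0 := (Nat.gcd_pos_of_pos_left k hn).ne'
  rw [setOf_mem_Ffield_Smap_eq_zero hn hlk hkl hde]
  refine ⟨fun hpT => ?_, fun hpT => ?_⟩
  · simp only [(CharP.cast_eq_zero_iff _ p _).2 hpT, zero_mul, and_true, Set.ofPred_mem_eq,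
      true_and]
    exact ncard_Ffield hd0
  · simp only [mul_eq_zero, (CharP.cast_eq_zero_iff _ p _).not.2 hpT, false_or]
    obtain ⟨himg, hcard⟩ := image_add_pow_Ffield (p := p) (Nat.gcd_pos_of_pos_left l hn).ne' hd0
      (Nat.gcd_dvd_gcd_of_dvd_right n hlk) hde
    exact ⟨himg.symm, himg ▸ hcard⟩

theorem stmt9 (p : ℕ) [Fact p.Prime] (n k l : ℕ) (hn : 0 < n) (hk : 0 < k) (hl : 0 < l)
    (hlk : l ∣ k) (hkl : Even (k / l)) (d e L : ℕ)
    (hd : d = Nat.gcd n k) (he : e = Nat.gcd n l) (hL : L = Nat.lcm d l)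
    (hde : Even (d / e)) :
    (p ∣ k / L →
      {x | x ∈ Ffield p n ∧ Smap p l k x = 0} = Ffield p d ∧
      {x | x ∈ Ffield p n ∧ Smap p l k x = 0}.ncard = p ^ d) ∧
    (¬ p ∣ k / L →
      {x | x ∈ Ffield p n ∧ Smap p l k x = 0} = (fun x => x + x ^ p ^ e) '' Ffield p d ∧
      {x | x ∈ Ffield p n ∧ Smap p l k x = 0}.ncard = p ^ (d - e)) :=
  stmt9_general p n k l hn hlk hkl d e L hd he hL hde
end

section
/- Let p be an odd prime, let n, k, l be positive integers with l | k and k/l even, and set d = gcd(n,k), e = gcd(n,l), L = lcm(d,l). Suppose that either d/e is odd, or d/e is even and p divides k/L. Let a ∈ 𝔽_{p^n}. Then the equation S_l^k(X) = a has a solution in 𝔽_{p^n} if and only if T_d^n(a) = 0. Moreover, in that case, for any δ ∈ 𝔽_{p^n} with T_d^n(δ) = 1, the element x₀ = T_l^{2l}( Σ_{i=0}^{n/d−2} Σ_{j=i+1}^{n/d−1} δ^{p^{kj}} a^{p^{ki}} ) lies in 𝔽_{p^n} and satisfies S_l^k(x₀) = a. -/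
open Finset

/-!
Write σ for `x ↦ x ^ p ^ k`. On `𝔽_{p^n}` the trace `T_d^n` (with `d = gcd(n, k)`) equals
`∑_{i < n/d} σ^i`, because `k * i mod n` runs over the multiples of `d`.

If `a = S_l^k(x)`, then `T_d^n(a) = S_l^k(t)` with `t = T_d^n(x) ∈ 𝔽_{p^d}`. Since `d ∣ L = l * (d/e)`,
`t` is fixed by the `(d/e)`-th iterate of `x ↦ x ^ p ^ l`, so the alternating sum `S_l^k(t)` factors
through the geometric sum `∑_{j < k/L} ((-1)^(d/e))^j`, which vanishes in either case.

Conversely, if `T_d^n(a) = 0` and `T_d^n(δ) = 1` (such a `δ` is a root of `T_d^n(X) - 1`), the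
additive Hilbert 90 element `y` satisfies `σ y = y - a`, and `S_l^k` telescopes on `y + y ^ p ^ l`
to `y - σ y = a` because `k/l` is even.
-/
theorem Function.Periodic.sum_range_mul_eq_sum_range_gcd_mul {M : Type*} [AddCommMonoid M]
    {g : ℕ → M} {n : ℕ} (hg : Function.Periodic g n) (hn : 0 < n) (k : ℕ) :
    ∑ i ∈ range (n / n.gcd k), g (k * i) = ∑ i ∈ range (n / n.gcd k), g (n.gcd k * i) := by
  set d := n.gcd k
  set m := n / d
  have hd : 0 < d := Nat.gcd_pos_of_pos_left k hn
  have hm : 0 < m := Nat.div_pos (Nat.le_of_dvd hn (Nat.gcd_dvd_left n k)) hd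
  have hdm : d * m = n := Nat.mul_div_cancel' (Nat.gcd_dvd_left n k)
  have hk : k = d * (k / d) := (Nat.mul_div_cancel' (Nat.gcd_dvd_right n k)).symm
  have hcop : m.Coprime (k / d) := Nat.coprime_div_gcd_div_gcd hd
  set f : ℕ → ℕ := fun i => k / d * i % m
  have hmaps : ∀ i ∈ range m, f i ∈ range m := fun i _ => mem_range.2 (Nat.mod_lt _ hm)
  have hinj : Set.InjOn f (range m) := by
    intro i hi j hj hij
    have := Nat.ModEq.cancel_left_of_coprime hcop hij
    rwa [Nat.ModEq, Nat.mod_eq_of_lt (mem_range.1 hi), Nat.mod_eq_of_lt (mem_range.1 hj)] at this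
  refine sum_nbij f hmaps hinj (surjOn_of_injOn_of_card_le f hmaps hinj le_rfl) fun i _ => ?_
  rw [← hg.map_mod_nat, ← hdm, hk, mul_assoc, Nat.mul_mod_mul_left]

theorem sum_range_mul_eq_geom_sum_mul {R : Type*} [Semiring R] {g : ℕ → R} {ε : R} {r : ℕ}
    (h : ∀ i, g (i + r) = ε * g i) (q : ℕ) :
    ∑ i ∈ range (q * r), g i = (∑ j ∈ range q, ε ^ j) * ∑ i ∈ range r, g i := by
  have shift : ∀ j i, g (j * r + i) = ε ^ j * g i := by
    intro j i
    induction j with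
    | zero => simp
    | succ j ih => rw [add_mul, one_mul, add_right_comm, h, ih, pow_succ', mul_assoc]
  induction q with
  | zero => simp
  | succ q ih =>
    simp only [add_mul, one_mul, sum_range_add, ih, shift, ← mul_sum, sum_range_succ]

section Iterate

variable {R F : Type*}

theorem map_sum_range_iterate_sub [AddCommGroup R] [FunLike F R R] [AddMonoidHomClass F R R]
    (σ : F) (m : ℕ) (x : R) :
    σ (∑ i ∈ range m, σ^[i] x) - ∑ i ∈ range m, σ^[i] x = σ^[m] x - x := by
  simp_rw [map_sum, ← Function.iterate_succ_apply' σ, ← sum_sub_distrib]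
  exact sum_range_sub (fun i => σ^[i] x) m

theorem sum_range_neg_one_pow_mul_iterate_add_map [Ring R] [FunLike F R R]
    [AddMonoidHomClass F R R] (σ : F) (N : ℕ) (y : R) :
    ∑ i ∈ range N, (-1) ^ i * σ^[i] (y + σ y) = y - (-1) ^ N * σ^[N] y := by
  have telescope := sum_range_sub' (fun i => (-1 : R) ^ i * σ^[i] y) N
  simp only [pow_zero, one_mul, Function.iterate_zero_apply] at telescope
  rw [← telescope]
  refine sum_congr rfl fun i _ => ?_
  rw [iterate_map_add, Function.iterate_add_apply, Function.iterate_one, pow_succ, mul_neg_one,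
    neg_mul, sub_neg_eq_add, mul_add]

variable [CommRing R] (σ : R →+* R)

/-- The standard explicit witness in the additive Hilbert 90 theorem. -/
def additiveHilbert90Witness (m : ℕ) (δ a : R) : R :=
  ∑ i ∈ range (m - 1), ∑ j ∈ Ico (i + 1) m, σ^[j] δ * σ^[i] a

theorem map_additiveHilbert90Witness {m : ℕ} (hm : 0 < m) {δ a : R}
    (hδ : ∑ i ∈ range m, σ^[i] δ = 1) (ha : ∑ i ∈ range m, σ^[i] a = 0) :
    σ (additiveHilbert90Witness σ m δ a) = additiveHilbert90Witness σ m δ a - a := by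
  obtain ⟨M, rfl⟩ := Nat.exists_eq_add_one_of_ne_zero hm.ne'
  have hδfix : σ^[M + 1] δ = δ := by
    have := map_sum_range_iterate_sub σ (M + 1) δ
    rw [hδ, map_one, sub_self] at this
    exact sub_eq_zero.1 this.symm
  set c : ℕ → R := fun i => ∑ j ∈ Ico (i + 1) (M + 1), σ^[j] δ
  have hc : ∀ i < M, σ (c i) = c (i + 1) + δ := by
    intro i hi
    simp only [c, map_sum, ← Function.iterate_succ_apply' σ, Nat.succ_eq_add_one]
    rw [sum_Ico_add' (fun j => σ^[j] δ), sum_Ico_succ_top (by omega), hδfix]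
  have hc0 : c 0 = 1 - δ := by
    rw [← hδ, range_eq_Ico, sum_eq_sum_Ico_succ_bot (Nat.succ_pos M)]
    simp [c]
  have hcM : c M = 0 := by simp [c]
  have ha' : ∑ i ∈ range M, σ^[i + 1] a = -a := by
    rw [sum_range_succ'] at ha
    simpa using eq_neg_of_add_eq_zero_left ha
  have hW : additiveHilbert90Witness σ (M + 1) δ a = ∑ i ∈ range M, c i * σ^[i] a := by
    simp only [additiveHilbert90Witness, Nat.add_sub_cancel, c, sum_mul]
  have hshift := (sum_range_succ' (fun i => c i * σ^[i] a) M).symm.trans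
    (sum_range_succ (fun i => c i * σ^[i] a) M)
  rw [hW, map_sum]
  simp only [map_mul, ← Function.iterate_succ_apply' σ]
  rw [sum_congr rfl fun i hi => by rw [hc i (mem_range.1 hi)]]
  simp only [add_mul, sum_add_distrib, ← mul_sum, ha']
  simp only [hcM, hc0, zero_mul, add_zero, Function.iterate_zero_apply] at hshift
  linear_combination hshift

end Iterate

theorem iterate_iterateFrobenius {R : Type*} [CommSemiring R] (p : ℕ) [ExpChar R p] (u i : ℕ)
    (x : R) : (iterateFrobenius R p u)^[i] x = x ^ p ^ (u * i) := by
  rw [← iterateFrobenius_mul_apply, iterateFrobenius_def]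

theorem additiveHilbert90Witness_iterateFrobenius {R : Type*} [CommRing R] (p : ℕ) [ExpChar R p]
    (k m : ℕ) (δ a : R) :
    additiveHilbert90Witness (iterateFrobenius R p k) m δ a =
      ∑ i ∈ range (m - 1), ∑ j ∈ Ico (i + 1) m, δ ^ p ^ (k * j) * a ^ p ^ (k * i) := by
  simp only [additiveHilbert90Witness, iterate_iterateFrobenius]

section Frobenius

variable {p : ℕ} [Fact p.Prime]

local notation "K" => AlgebraicClosure (ZMod p)

theorem mem_Ffield_iff_mem_eqLocus {n : ℕ} {x : K} :
    x ∈ Ffield p n ↔ x ∈ (iterateFrobenius K p n).eqLocus (RingHom.id K) := Iff.rfl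

theorem mem_Ffield_of_dvd {d n : ℕ} (hdn : d ∣ n) {x : K} (hx : x ∈ Ffield p d) :
    x ∈ Ffield p n := by
  obtain ⟨s, rfl⟩ := hdn
  change x ^ p ^ (d * s) = x
  rw [← iterate_iterateFrobenius]
  exact Function.iterate_fixed hx s

theorem Tmap_eq_sum_iterate (u v : ℕ) (x : K) :
    Tmap p u v x = ∑ i ∈ range (v / u), (iterateFrobenius K p u)^[i] x := by
  simp only [Tmap, iterate_iterateFrobenius]

theorem Smap_eq_sum_iterate (u v : ℕ) (x : K) :
    Smap p u v x = ∑ i ∈ range (v / u), (-1) ^ i * (iterateFrobenius K p u)^[i] x := by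
  simp only [Smap, iterate_iterateFrobenius]

theorem Tmap_mem_Ffield {n : ℕ} (u v : ℕ) {x : K} (hx : x ∈ Ffield p n) :
    Tmap p u v x ∈ Ffield p n :=
  sum_mem fun _ _ => pow_mem (mem_Ffield_iff_mem_eqLocus.1 hx) _

theorem Tmap_pow_sub_Tmap {d n : ℕ} (hdn : d ∣ n) (x : K) :
    Tmap p d n x ^ p ^ d - Tmap p d n x = x ^ p ^ n - x := by
  have key := map_sum_range_iterate_sub (iterateFrobenius K p d) (n / d) x
  rwa [iterate_iterateFrobenius, Nat.mul_div_cancel' hdn, ← Tmap_eq_sum_iterate] at key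

theorem Tmap_mem_Ffield_of_dvd {d n : ℕ} (hdn : d ∣ n) {x : K} (hx : x ∈ Ffield p n) :
    Tmap p d n x ∈ Ffield p d :=
  sub_eq_zero.1 <| (Tmap_pow_sub_Tmap hdn x).trans (sub_eq_zero.2 hx)

theorem Tmap_Smap_comm (u v u' v' : ℕ) (x : K) :
    Tmap p u v (Smap p u' v' x) = Smap p u' v' (Tmap p u v x) := by
  simp only [Tmap, Smap, sum_pow_char_pow, mul_pow, ← pow_mul, mul_sum]
  rw [sum_comm]
  refine sum_congr rfl fun i _ => sum_congr rfl fun j _ => ?_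
  rw [pow_mul, pow_right_comm, neg_one_pow_char_pow, ← pow_add, ← pow_add, add_comm]

theorem Smap_eq_zero_of_mem_Ffield {d k l : ℕ} (hd : 0 < d) (hl : 0 < l) (hlk : l ∣ k)
    (hdk : d ∣ k) (hkl : Even (k / l))
    (hcase : Odd (d / d.gcd l) ∨ (Even (d / d.gcd l) ∧ p ∣ k / d.lcm l))
    {t : K} (ht : t ∈ Ffield p d) : Smap p l k t = 0 := by
  set r := d / d.gcd l
  set q := k / d.lcm l
  have hlcm : d.lcm l = l * r := by
    rw [Nat.lcm, mul_comm d l, Nat.mul_div_assoc l (Nat.gcd_dvd_left d l)]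
  have hkl' : k / l = q * r := by
    obtain ⟨s, hs⟩ := Nat.lcm_dvd hdk hlk
    have hqs : q = s := by
      rw [show q = k / d.lcm l from rfl, hs, Nat.mul_div_cancel_left _ (Nat.lcm_pos hd hl)]
    rw [hs, hlcm, hqs, mul_assoc, Nat.mul_div_cancel_left _ hl, mul_comm]
  set σ := iterateFrobenius K p l
  have hσt : σ^[r] t = t := by
    rw [iterate_iterateFrobenius, ← hlcm]
    exact mem_Ffield_of_dvd (Nat.dvd_lcm_left d l) ht
  have hshift : ∀ i, (-1) ^ (i + r) * σ^[i + r] t = (-1) ^ r * ((-1) ^ i * σ^[i] t) := by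
    intro i
    rw [Function.iterate_add_apply, hσt, pow_add]
    ring
  rw [Smap_eq_sum_iterate, hkl', sum_range_mul_eq_geom_sum_mul hshift]
  suffices ∑ j ∈ range q, ((-1 : K) ^ r) ^ j = 0 by rw [this, zero_mul]
  rcases hcase with hr | ⟨hr, hpq⟩
  · have hq : Even q :=
      (Nat.even_mul.1 (hkl' ▸ hkl)).resolve_right (Nat.not_even_iff_odd.2 hr)
    rw [hr.neg_one_pow, neg_one_geom_sum, if_pos hq]
  · rw [hr.neg_one_pow]
    simpa using (CharP.cast_eq_zero_iff K p q).2 hpq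

theorem Tmap_gcd_eq_sum_iterate {n : ℕ} (hn : 0 < n) (k : ℕ) {x : K} (hx : x ∈ Ffield p n) :
    Tmap p (n.gcd k) n x = ∑ i ∈ range (n / n.gcd k), (iterateFrobenius K p k)^[i] x := by
  have hper : Function.Periodic (fun j => x ^ p ^ j) n := fun j => by
    change x ^ p ^ n = x at hx
    simp only [pow_add, pow_mul', hx]
  simp only [Tmap, iterate_iterateFrobenius]
  exact (hper.sum_range_mul_eq_sum_range_gcd_mul hn k).symm

open Polynomial in
theorem exists_mem_Ffield_Tmap_eq_one {d n : ℕ} (hd : 0 < d) (hn : 0 < n) (hdn : d ∣ n) :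
    ∃ δ ∈ Ffield p n, Tmap p d n δ = 1 := by
  obtain ⟨M, hM⟩ : ∃ M, n / d = M + 1 :=
    Nat.exists_eq_add_one_of_ne_zero (Nat.div_pos (Nat.le_of_dvd hn hdn) hd).ne'
  set P : K[X] := ∑ i ∈ range (M + 1), X ^ p ^ (d * i) - C 1
  have hp : p.Prime := Fact.out
  have hcoeff : P.coeff (p ^ (d * M)) = 1 := by
    simp [P, coeff_X_pow, coeff_one, Nat.pow_right_inj hp.one_lt, hd.ne', hp.ne_zero]
  have hdeg : P.degree ≠ 0 := fun h => by
    have := le_natDegree_of_ne_zero (p := P) (n := p ^ (d * M)) (by rw [hcoeff]; exact one_ne_zero)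
    rw [natDegree_eq_of_degree_eq_some h] at this
    exact (pow_pos hp.pos _).ne' (Nat.le_zero.1 this)
  obtain ⟨δ, hδ⟩ := IsAlgClosed.exists_root P hdeg
  have hT : Tmap p d n δ = 1 := by
    simpa [P, Tmap, hM, sub_eq_zero, eval_finsetSum] using hδ
  refine ⟨δ, ?_, hT⟩
  have key := Tmap_pow_sub_Tmap hdn δ
  rw [hT, one_pow, sub_self, eq_comm, sub_eq_zero] at key
  exact key

theorem Tmap_two_mul {l : ℕ} (hl : 0 < l) (y : K) : Tmap p l (2 * l) y = y + y ^ p ^ l := by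
  simp [Tmap, Nat.mul_div_cancel 2 hl, sum_range_succ]

theorem Smap_Tmap_two_mul {k l : ℕ} (hl : 0 < l) (hlk : l ∣ k) (hkl : Even (k / l)) (y : K) :
    Smap p l k (Tmap p l (2 * l) y) = y - y ^ p ^ k := by
  rw [Tmap_two_mul hl, ← iterateFrobenius_def, Smap_eq_sum_iterate,
    sum_range_neg_one_pow_mul_iterate_add_map, hkl.neg_one_pow, one_mul, iterate_iterateFrobenius,
    Nat.mul_div_cancel' hlk]

theorem additiveHilbert90Witness_mem_Ffield {n : ℕ} (k m : ℕ) {a δ : K} (ha : a ∈ Ffield p n)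
    (hδ : δ ∈ Ffield p n) :
    additiveHilbert90Witness (iterateFrobenius K p k) m δ a ∈ Ffield p n := by
  rw [mem_Ffield_iff_mem_eqLocus] at *
  rw [additiveHilbert90Witness_iterateFrobenius]
  exact sum_mem fun _ _ => sum_mem fun _ _ => mul_mem (pow_mem hδ _) (pow_mem ha _)

theorem Smap_Tmap_additiveHilbert90Witness {n k l : ℕ} (hn : 0 < n) (hl : 0 < l) (hlk : l ∣ k)
    (hkl : Even (k / l)) {a δ : K} (ha : a ∈ Ffield p n) (hδ : δ ∈ Ffield p n)
    (ha0 : Tmap p (n.gcd k) n a = 0) (hδ1 : Tmap p (n.gcd k) n δ = 1) :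
    Smap p l k (Tmap p l (2 * l)
      (additiveHilbert90Witness (iterateFrobenius K p k) (n / n.gcd k) δ a)) = a := by
  have hm : 0 < n / n.gcd k :=
    Nat.div_pos (Nat.le_of_dvd hn (Nat.gcd_dvd_left n k)) (Nat.gcd_pos_of_pos_left k hn)
  rw [Tmap_gcd_eq_sum_iterate hn k ha] at ha0
  rw [Tmap_gcd_eq_sum_iterate hn k hδ] at hδ1
  rw [Smap_Tmap_two_mul hl hlk hkl, ← iterateFrobenius_def,
    map_additiveHilbert90Witness _ hm hδ1 ha0, sub_sub_cancel]

end Frobenius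

theorem stmt15_general (p : ℕ) [Fact p.Prime] (n k l : ℕ)
    (hn : 0 < n) (hl : 0 < l)
    (hlk : l ∣ k) (hkl : Even (k / l)) (d e L : ℕ)
    (hd : d = Nat.gcd n k) (he : e = Nat.gcd n l) (hL : L = Nat.lcm d l)
    (hcase : Odd (d / e) ∨ (Even (d / e) ∧ p ∣ k / L))
    (a : AlgebraicClosure (ZMod p)) (ha : a ∈ Ffield p n) :
    ((∃ x ∈ Ffield p n, Smap p l k x = a) ↔ Tmap p d n a = 0) ∧
    (Tmap p d n a = 0 → ∀ δ ∈ Ffield p n, Tmap p d n δ = 1 →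
      ∀ x₀, x₀ = Tmap p l (2 * l) (∑ i ∈ Finset.range (n / d - 1),
          ∑ j ∈ Finset.Ico (i + 1) (n / d), δ ^ p ^ (k * j) * a ^ p ^ (k * i)) →
        x₀ ∈ Ffield p n ∧ Smap p l k x₀ = a) := by
  have he' : n.gcd l = (n.gcd k).gcd l := by rw [Nat.gcd_assoc, Nat.gcd_eq_right hlk]
  rw [he, he'] at hcase
  subst hd hL
  have hd0 : 0 < n.gcd k := Nat.gcd_pos_of_pos_left k hn
  refine ⟨⟨?_, fun ha0 => ?_⟩, fun ha0 δ hδ hδ1 x₀ hx₀ => ?_⟩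
  · rintro ⟨x, hx, rfl⟩
    rw [Tmap_Smap_comm]
    exact Smap_eq_zero_of_mem_Ffield hd0 hl hlk (Nat.gcd_dvd_right n k) hkl hcase
      (Tmap_mem_Ffield_of_dvd (Nat.gcd_dvd_left n k) hx)
  · obtain ⟨δ, hδ, hδ1⟩ := exists_mem_Ffield_Tmap_eq_one (p := p) hd0 hn (Nat.gcd_dvd_left n k)
    exact ⟨_, Tmap_mem_Ffield _ _ (additiveHilbert90Witness_mem_Ffield k _ ha hδ),
      Smap_Tmap_additiveHilbert90Witness hn hl hlk hkl ha hδ ha0 hδ1⟩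
  · rw [hx₀, ← additiveHilbert90Witness_iterateFrobenius]
    exact ⟨Tmap_mem_Ffield _ _ (additiveHilbert90Witness_mem_Ffield k _ ha hδ),
      Smap_Tmap_additiveHilbert90Witness hn hl hlk hkl ha hδ ha0 hδ1⟩

theorem stmt15 (p : ℕ) [Fact p.Prime] (hp2 : p ≠ 2) (n k l : ℕ)
    (hn : 0 < n) (hk : 0 < k) (hl : 0 < l)
    (hlk : l ∣ k) (hkl : Even (k / l)) (d e L : ℕ)
    (hd : d = Nat.gcd n k) (he : e = Nat.gcd n l) (hL : L = Nat.lcm d l)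
    (hcase : Odd (d / e) ∨ (Even (d / e) ∧ p ∣ k / L))
    (a : AlgebraicClosure (ZMod p)) (ha : a ∈ Ffield p n) :
    ((∃ x ∈ Ffield p n, Smap p l k x = a) ↔ Tmap p d n a = 0) ∧
    (Tmap p d n a = 0 → ∀ δ ∈ Ffield p n, Tmap p d n δ = 1 →
      ∀ x₀, x₀ = Tmap p l (2 * l) (∑ i ∈ Finset.range (n / d - 1),
          ∑ j ∈ Finset.Ico (i + 1) (n / d), δ ^ p ^ (k * j) * a ^ p ^ (k * i)) →
        x₀ ∈ Ffield p n ∧ Smap p l k x₀ = a) :=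
  stmt15_general p n k l hn hl hlk hkl d e L hd he hL hcase a ha
end
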